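/- Let E = A ⊕ B with multiplication m having components m^B_{BB} = m_B, m^A_{AA} = m_A (both associative), m^A_{BA} = φ, m^A_{AB} = ψ, m^A_{BB} = χ, and all components m^B_{AB}, m^B_{BA}, m^B_{AA} zero. Then m is associative if and only if the sum of associator components As^A_{BBA} + As^A_{ABB} + As^A_{BAB} + As^A_{BBB} + As^A_{AAB} + As^A_{ABA} + As^A_{BAA} vanishes, which holds if and only if c := φ + ψ + χ is a Maurer–Cartan element of the dgLa L. -/
import Mathlib


/- STATEMENT 13: for the multiplication m on E = A ⊕ B with components
   m^B_{BB} = m_B, m^A_{AA} = m_A, m^A_{BA} = φ, m^A_{AB} = ψ, m^A_{BB} = χ and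
   vanishing components m^B_{AB}, m^B_{BA}, m^B_{AA}, associativity of m is
   equivalent to the vanishing of the sum of the seven associator components
   As^A_{BBA} + As^A_{ABB} + As^A_{BAB} + As^A_{BBB} + As^A_{AAB} + As^A_{ABA}
   + As^A_{BAA}, which in turn is equivalent to c = φ + ψ + χ being a
   Maurer–Cartan element of the dgLa L. -/

abbrev Cochain (V : Type*) := (ℕ → V) → V

section Gerstenhaber

variable {V : Type*} [AddCommGroup V]

def insertArg (n i : ℕ) (g : Cochain V) (a : ℕ → V) : ℕ → V := fun j =>
  if j < i then a j else if j = i then g (fun t => a (t + i)) else a (j + n)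

def gcomp (m n : ℕ) (f g : Cochain V) : Cochain V := fun a =>
  ∑ i ∈ Finset.range (m + 1), ((-1 : ℤ) ^ (n * i)) • f (insertArg n i g a)

def gbracket (m n : ℕ) (f g : Cochain V) : Cochain V :=
  gcomp m n f g - ((-1 : ℤ) ^ (m * n)) • gcomp n m g f

end Gerstenhaber

def mulCochain (R : Type*) [NonUnitalRing R] : Cochain R := fun a => a 0 * a 1

/-- Maurer–Cartan equation `δc + ½[c,c] = 0` (with `δ = [μ,·]`, `½[c,c] = c∘c`). -/
def IsMC {R : Type*} [NonUnitalRing R] (c : Cochain R) : Prop :=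
  gbracket 1 1 (mulCochain R) c + gcomp 1 1 c c = 0

variable {k : Type*} [Field k]
variable {A B : Type*}
variable [NonUnitalRing A] [Module k A] [SMulCommClass k A A] [IsScalarTower k A A]
variable [NonUnitalRing B] [Module k B] [SMulCommClass k B B] [IsScalarTower k B B]

/-- The multiplication on `E = A ⊕ B` with the prescribed components. -/
def twMul (φ ψ : B →ₗ[k] A →ₗ[k] A) (χ : B →ₗ[k] B →ₗ[k] A) (x y : A × B) : A × B :=
  (x.1 * y.1 + φ x.2 y.1 + ψ y.2 x.1 + χ x.2 y.2, x.2 * y.2)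

/-- The associator of the multiplication `twMul φ ψ χ`. -/
def assocDef (φ ψ : B →ₗ[k] A →ₗ[k] A) (χ : B →ₗ[k] B →ₗ[k] A)
    (x y z : A × B) : A × B :=
  twMul φ ψ χ (twMul φ ψ χ x y) z - twMul φ ψ χ x (twMul φ ψ χ y z)

/-- The element `c = φ + ψ + χ` of `L¹`. -/
def cochainOf (φ ψ : B →ₗ[k] A →ₗ[k] A) (χ : B →ₗ[k] B →ₗ[k] A) :
    Cochain (A × B) := fun a =>
  (φ (a 0).2 (a 1).1 + ψ (a 1).2 (a 0).1 + χ (a 0).2 (a 1).2, 0)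


section Aux
set_option linter.unusedSectionVars false

variable {k : Type*} [Field k]
variable {A B : Type*}
variable [NonUnitalRing A] [Module k A] [SMulCommClass k A A] [IsScalarTower k A A]
variable [NonUnitalRing B] [Module k B] [SMulCommClass k B B] [IsScalarTower k B B]
variable (φ ψ : B →ₗ[k] A →ₗ[k] A) (χ : B →ₗ[k] B →ₗ[k] A)

lemma assocDef_snd (x y z : A × B) : (assocDef φ ψ χ x y z).2 = 0 := by
  simp [assocDef, twMul, mul_assoc]

lemma seven_eq (e₁ e₂ e₃ : A × B) :
    (assocDef φ ψ χ (0, e₁.2) (0, e₂.2) (e₃.1, 0)).1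
      + (assocDef φ ψ χ (e₁.1, 0) (0, e₂.2) (0, e₃.2)).1
      + (assocDef φ ψ χ (0, e₁.2) (e₂.1, 0) (0, e₃.2)).1
      + (assocDef φ ψ χ (0, e₁.2) (0, e₂.2) (0, e₃.2)).1
      + (assocDef φ ψ χ (e₁.1, 0) (e₂.1, 0) (0, e₃.2)).1
      + (assocDef φ ψ χ (e₁.1, 0) (0, e₂.2) (e₃.1, 0)).1
      + (assocDef φ ψ χ (0, e₁.2) (e₂.1, 0) (e₃.1, 0)).1
    = (assocDef φ ψ χ e₁ e₂ e₃).1 := by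
  simp only [assocDef, twMul, Prod.fst_sub]
  simp [mul_add, add_mul, mul_assoc]
  abel

lemma MC_eq (a : ℕ → A × B) :
    (gbracket 1 1 (mulCochain (A × B)) (cochainOf φ ψ χ)
      + gcomp 1 1 (cochainOf φ ψ χ) (cochainOf φ ψ χ)) a
    = assocDef φ ψ χ (a 0) (a 1) (a 2) := by
  simp only [Pi.add_apply, gbracket, Pi.sub_apply, Pi.smul_apply, gcomp, insertArg,
    Finset.sum_range_succ, Finset.range_zero, Finset.sum_empty, mulCochain, cochainOf]
  norm_num
  ext
  · simp [assocDef, twMul, Prod.mul_def, mul_add, add_mul, mul_assoc]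
    abel
  · simp [assocDef, twMul, Prod.mul_def, mul_assoc]

end Aux

theorem assoc_iff_associator_components_iff_MC
    (φ ψ : B →ₗ[k] A →ₗ[k] A) (χ : B →ₗ[k] B →ₗ[k] A) :
    -- m is associative
    ((∀ x y z : A × B, assocDef φ ψ χ x y z = 0) ↔
      -- iff the sum of the seven A-valued associator components vanishes
      (∀ e₁ e₂ e₃ : A × B,
        (assocDef φ ψ χ (0, e₁.2) (0, e₂.2) (e₃.1, 0)).1    -- As^A_{BBA}
          + (assocDef φ ψ χ (e₁.1, 0) (0, e₂.2) (0, e₃.2)).1  -- As^A_{ABB}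
          + (assocDef φ ψ χ (0, e₁.2) (e₂.1, 0) (0, e₃.2)).1  -- As^A_{BAB}
          + (assocDef φ ψ χ (0, e₁.2) (0, e₂.2) (0, e₃.2)).1  -- As^A_{BBB}
          + (assocDef φ ψ χ (e₁.1, 0) (e₂.1, 0) (0, e₃.2)).1  -- As^A_{AAB}
          + (assocDef φ ψ χ (e₁.1, 0) (0, e₂.2) (e₃.1, 0)).1  -- As^A_{ABA}
          + (assocDef φ ψ χ (0, e₁.2) (e₂.1, 0) (e₃.1, 0)).1  -- As^A_{BAA}
          = 0)) ∧
    -- iff c = φ + ψ + χ is a Maurer–Cartan element of L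
    ((∀ e₁ e₂ e₃ : A × B,
        (assocDef φ ψ χ (0, e₁.2) (0, e₂.2) (e₃.1, 0)).1
          + (assocDef φ ψ χ (e₁.1, 0) (0, e₂.2) (0, e₃.2)).1
          + (assocDef φ ψ χ (0, e₁.2) (e₂.1, 0) (0, e₃.2)).1
          + (assocDef φ ψ χ (0, e₁.2) (0, e₂.2) (0, e₃.2)).1
          + (assocDef φ ψ χ (e₁.1, 0) (e₂.1, 0) (0, e₃.2)).1
          + (assocDef φ ψ χ (e₁.1, 0) (0, e₂.2) (e₃.1, 0)).1
          + (assocDef φ ψ χ (0, e₁.2) (e₂.1, 0) (e₃.1, 0)).1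
          = 0) ↔
      IsMC (cochainOf φ ψ χ)) := by
  have key : ∀ (P : Prop), P ∨ True := fun P => Or.inr trivial
  have h1 : (∀ x y z : A × B, assocDef φ ψ χ x y z = 0) ↔
      (∀ e₁ e₂ e₃ : A × B, assocDef φ ψ χ e₁ e₂ e₃ = 0) := Iff.rfl
  have hfst : (∀ x y z : A × B, assocDef φ ψ χ x y z = 0) ↔
      (∀ x y z : A × B, (assocDef φ ψ χ x y z).1 = 0) := by
    constructor
    · intro h x y z; rw [h]; rfl
    · intro h x y z
      ext
      · exact h x y z
      · exact assocDef_snd φ ψ χ x y z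
  constructor
  · rw [hfst]
    constructor
    · intro h e₁ e₂ e₃; rw [seven_eq]; exact h _ _ _
    · intro h x y z; rw [← seven_eq]; exact h x y z
  · constructor
    · intro h
      unfold IsMC
      funext a
      rw [MC_eq]
      have := h (a 0) (a 1) (a 2)
      rw [seven_eq] at this
      ext
      · exact this
      · exact assocDef_snd φ ψ χ _ _ _
    · intro h e₁ e₂ e₃
      rw [seven_eq]
      have := congrFun h (fun n => if n = 0 then e₁ else if n = 1 then e₂ else e₃)
      rw [MC_eq] at this
      simpa using congrArg Prod.fst this
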